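/- Let Y be a finitely ramified fractal which is topologically rigid and whose metric d_Y is undistorted. Let (X, d_X) be a metric space and let h : X → Y be a homeomorphism; equip X with the finitely ramified cell structure pulled back along h (the n-cells of X are the preimages under h of the n-cells of Y). Then there exists a quasisymmetry from (X, d_X) to (Y, d_Y) if and only if d_X is undistorted with respect to this pulled-back cell structure. -/

import Mathlib

open Set

/-- A finitely ramified cell structure on a topological space `X`: a locally finite,
level-indexed family of "cells", where each cell is compact, connected, with nonempty
interior, the unique `0`-cell is all of `X`, every `(n+1)`-cell lies in some `n`-cell,
each `n`-cell is the union of the `(n+1)`-cells it contains, two distinct cells of the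
same level meet in a finite set, and every infinite descending chain of cells
intersects in a single point. -/
structure CellStructure (X : Type*) [TopologicalSpace X] where
  cells : ℕ → Set (Set X)
  finite_cells : ∀ n, (cells n).Finite
  isCompact_cells : ∀ n, ∀ E ∈ cells n, IsCompact E
  isConnected_cells : ∀ n, ∀ E ∈ cells n, IsConnected E
  interior_nonempty : ∀ n, ∀ E ∈ cells n, (interior E).Nonempty
  root : cells 0 = {Set.univ}
  exists_parent : ∀ n, ∀ E' ∈ cells (n + 1), ∃ E ∈ cells n, E' ⊆ E
  eq_sUnion_children : ∀ n, ∀ E ∈ cells n, E = ⋃₀ {E' | E' ∈ cells (n + 1) ∧ E' ⊆ E}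
  inter_finite : ∀ n, ∀ E₁ ∈ cells n, ∀ E₂ ∈ cells n, E₁ ≠ E₂ → (E₁ ∩ E₂).Finite
  descending_singleton : ∀ E : ℕ → Set X, (∀ n, E n ∈ cells n) → (∀ n, E (n + 1) ⊆ E n) →
    ∃ p : X, (⋂ n, E n) = {p}

/-- `d` is a metric (distance function) on the set `X`. -/
def IsMetricOn {X : Type*} (d : X → X → ℝ) : Prop :=
  (∀ x y, 0 ≤ d x y) ∧ (∀ x y, d x y = 0 ↔ x = y) ∧ (∀ x y, d x y = d y x) ∧
    ∀ x y z, d x z ≤ d x y + d y z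

/-- The distance function `d` induces the given topology on `X`. -/
def InducesTopology {X : Type*} [TopologicalSpace X] (d : X → X → ℝ) : Prop :=
  ∀ s : Set X, IsOpen s ↔ ∀ x ∈ s, ∃ ε > 0, ∀ y, d x y < ε → y ∈ s

/-- The diameter of a set with respect to a distance function. -/
noncomputable def sdiam {X : Type*} (d : X → X → ℝ) (S : Set X) : ℝ :=
  sSup (Set.image2 d S S)

/-- The distance between two sets with respect to a distance function. -/
noncomputable def sdist {X : Type*} (d : X → X → ℝ) (S T : Set X) : ℝ :=
  sInf (Set.image2 d S T)

/-- The distance function `d` is `(r,R,C,δ)`-undistorted with respect to the family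
of cells `cells`: exponential decay of diameter ratios of intersecting cells, and
cell separation for disjoint cells of the same level. -/
def IsUndistortedWith {X : Type*} (cells : ℕ → Set (Set X)) (d : X → X → ℝ)
    (r R C δ : ℝ) : Prop :=
  0 < r ∧ r ≤ R ∧ R < 1 ∧ 1 ≤ C ∧ 0 < δ ∧
    (∀ m n : ℕ, m ≤ n → ∀ E ∈ cells m, ∀ E' ∈ cells n, (E ∩ E').Nonempty →
      r ^ (n - m) / C ≤ sdiam d E' / sdiam d E ∧
        sdiam d E' / sdiam d E ≤ C * R ^ (n - m)) ∧
    ∀ n : ℕ, ∀ E₁ ∈ cells n, ∀ E₂ ∈ cells n, Disjoint E₁ E₂ →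
      δ * sdiam d E₁ ≤ sdist d E₁ E₂

/-- `d` is undistorted if it is `(r,R,C,δ)`-undistorted for some constants. -/
def IsUndistorted {X : Type*} (cells : ℕ → Set (Set X)) (d : X → X → ℝ) : Prop :=
  ∃ r R C δ : ℝ, IsUndistortedWith cells d r R C δ

/-- `η` is a homeomorphism of `[0,∞)` onto itself (equivalently: a continuous,
strictly increasing surjection of `[0,∞)` onto `[0,∞)` fixing `0`). -/
def IsQSGauge (η : ℝ → ℝ) : Prop :=
  ContinuousOn η (Set.Ici 0) ∧ StrictMonoOn η (Set.Ici 0) ∧ η 0 = 0 ∧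
    Set.MapsTo η (Set.Ici 0) (Set.Ici 0) ∧ Set.SurjOn η (Set.Ici 0) (Set.Ici 0)

/-- The `η`-quasisymmetry inequality for a map `f` between sets carrying
distance functions `dX` and `dY`. -/
def QSIneq {X Y : Type*} (dX : X → X → ℝ) (dY : Y → Y → ℝ) (f : X → Y) (η : ℝ → ℝ) : Prop :=
  ∀ a b c : X, a ≠ b → a ≠ c → b ≠ c →
    dY (f a) (f b) / dY (f a) (f c) ≤ η (dX a b / dX a c)


/-!
For distinct points `p, q` let `n` be the last level at which `p` and `q` lie in intersecting
`n`-cells. For an undistorted metric, `d p q` is comparable, with uniform constants, to the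
diameter of any `n`-cell containing `p`. Since this level is combinatorial, it is the same for `X`
and `Y` when the cells of `X` are pulled back along `h`. Hence, in both spaces, `d(a,b) / d(a,c)`
is comparable to the diameter ratio of two cells around `a` whose levels differ by some `k`, and
that ratio lies between `r ^ k` and `R ^ k` (suitably inverted when `k < 0`). Matching exponents
shows that `h` is a quasisymmetry with gauge `t ↦ M ((K t) ^ α + (K t) ^ β)`.

Conversely, if `f` is a quasisymmetry then `f ∘ h⁻¹` is a self-homeomorphism of `Y`, so by
rigidity `f` maps cells onto cells. Quasisymmetry bounds `diam f(B) / diam f(A)` by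
`η (3 diam B / diam A)` for sets sharing a point, which read backwards turns the decay estimates in
`Y` into: comparable diameters for cells at one level, a uniform lower bound for child/parent
diameter ratios, and a level gap after which diameters at least halve. Chaining these gives
exponential decay in `X`; cell separation is transferred directly by the quasisymmetry inequality.
-/

open Function

section Diameter

variable {Z : Type*} {d : Z → Z → ℝ}

lemma isMetricOn_dist {X : Type*} [MetricSpace X] : IsMetricOn (fun a b : X => dist a b) :=
  ⟨fun _ _ => dist_nonneg, fun _ _ => dist_eq_zero, dist_comm, dist_triangle⟩

lemma sdiam_nonneg (hd : IsMetricOn d) (S : Set Z) : 0 ≤ sdiam d S :=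
  Real.sSup_nonneg (by rintro _ ⟨a, _, b, _, rfl⟩; exact hd.1 a b)

lemma le_sdiam {S : Set Z} (hS : BddAbove (image2 d S S)) {x y : Z} (hx : x ∈ S)
    (hy : y ∈ S) : d x y ≤ sdiam d S :=
  le_csSup hS ⟨x, hx, y, hy, rfl⟩

lemma sdiam_le {S : Set Z} {c : ℝ} (hc : 0 ≤ c) (H : ∀ x ∈ S, ∀ y ∈ S, d x y ≤ c) :
    sdiam d S ≤ c :=
  Real.sSup_le (by rintro _ ⟨a, ha, b, hb, rfl⟩; exact H a ha b hb) hc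

lemma sdist_le (hd : IsMetricOn d) {S T : Set Z} {x y : Z} (hx : x ∈ S) (hy : y ∈ T) :
    sdist d S T ≤ d x y :=
  csInf_le ⟨0, by rintro _ ⟨a, _, b, _, rfl⟩; exact hd.1 a b⟩ ⟨x, hx, y, hy, rfl⟩

lemma le_sdist {S T : Set Z} {c : ℝ} (hS : S.Nonempty) (hT : T.Nonempty)
    (H : ∀ x ∈ S, ∀ y ∈ T, c ≤ d x y) : c ≤ sdist d S T :=
  le_csInf (hS.image2 hT) (by rintro _ ⟨a, ha, b, hb, rfl⟩; exact H a ha b hb)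

-- `sSup` of a set of reals that is not bounded above is the junk value `0`.
lemma bddAbove_of_sdiam_pos {S : Set Z} (h : 0 < sdiam d S) : BddAbove (image2 d S S) := by
  by_contra hS
  rw [sdiam, Real.sSup_of_not_bddAbove hS] at h
  exact h.false

lemma nonempty_of_sdiam_pos {S : Set Z} (h : 0 < sdiam d S) : S.Nonempty := by
  by_contra hS
  rw [not_nonempty_iff_eq_empty.1 hS, sdiam, image2_empty_left, Real.sSup_empty] at h
  exact h.false

lemma exists_ne_of_sdiam_pos (hd : IsMetricOn d) {S : Set Z} (h : 0 < sdiam d S) :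
    ∃ x ∈ S, ∃ y ∈ S, x ≠ y := by
  obtain ⟨_, ⟨x, hx, y, hy, rfl⟩, hxy⟩ :=
    exists_lt_of_lt_csSup ((nonempty_of_sdiam_pos h).image2 (nonempty_of_sdiam_pos h)) h
  exact ⟨x, hx, y, hy, fun e => hxy.ne' ((hd.2.1 x y).2 e)⟩

lemma sdiam_pos_of_ne (hd : IsMetricOn d) {S : Set Z} (hS : BddAbove (image2 d S S))
    {x y : Z} (hx : x ∈ S) (hy : y ∈ S) (hxy : x ≠ y) : 0 < sdiam d S :=
  (lt_of_le_of_ne (hd.1 x y) fun e => hxy ((hd.2.1 x y).1 e.symm)).trans_le (le_sdiam hS hx hy)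

lemma exists_sdiam_div_three_lt (hd : IsMetricOn d) {S : Set Z} (h : 0 < sdiam d S) (x : Z) :
    ∃ a ∈ S, sdiam d S / 3 < d x a := by
  have hS := nonempty_of_sdiam_pos h
  obtain ⟨_, ⟨p, hp, q, hq, rfl⟩, hpq⟩ :=
    exists_lt_of_lt_csSup (hS.image2 hS) (by linarith : 2 * sdiam d S / 3 < sdiam d S)
  have := hd.2.2.2 p x q
  rw [hd.2.2.1 p x] at this
  by_cases hxp : sdiam d S / 3 < d x p
  · exact ⟨p, hp, hxp⟩
  · exact ⟨q, hq, by linarith⟩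

end Diameter

structure CellSystem (Z : Type*) where
  cells : ℕ → Set (Set Z)
  univ_mem : univ ∈ cells 0
  nonempty_of_mem : ∀ n, ∀ E ∈ cells n, E.Nonempty
  exists_mem : ∀ n (x : Z), ∃ E ∈ cells n, x ∈ E

def CellStructure.toCellSystem {Y : Type*} [TopologicalSpace Y] (S : CellStructure Y) :
    CellSystem Y where
  cells := S.cells
  univ_mem := S.root ▸ rfl
  nonempty_of_mem n E hE := (S.interior_nonempty n E hE).mono interior_subset
  exists_mem n y := by
    induction n with
    | zero => exact ⟨univ, S.root ▸ rfl, trivial⟩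
    | succ n ih =>
      obtain ⟨E, hE, hyE⟩ := ih
      rw [S.eq_sUnion_children n E hE] at hyE
      obtain ⟨E', ⟨hE', -⟩, hyE'⟩ := hyE
      exact ⟨E', hE', hyE'⟩

def CellSystem.comap {X Y : Type*} (h : X → Y) (hh : Surjective h) (S : CellSystem Y) :
    CellSystem X where
  cells n := preimage h '' S.cells n
  univ_mem := ⟨univ, S.univ_mem, rfl⟩
  nonempty_of_mem := by
    rintro n _ ⟨E, hE, rfl⟩
    exact (S.nonempty_of_mem n E hE).preimage hh
  exists_mem n x := by
    obtain ⟨E, hE, hxE⟩ := S.exists_mem n (h x)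
    exact ⟨h ⁻¹' E, ⟨E, hE, rfl⟩, hxE⟩

structure UndistortedCells (Z : Type*) extends CellSystem Z where
  d : Z → Z → ℝ
  r : ℝ
  R : ℝ
  C : ℝ
  δ : ℝ
  isUndistortedWith : IsUndistortedWith cells d r R C δ
  isMetricOn : IsMetricOn d

namespace UndistortedCells

variable {Z : Type*} (c : UndistortedCells Z)

lemma r_pos : 0 < c.r := c.isUndistortedWith.1
lemma r_le_R : c.r ≤ c.R := c.isUndistortedWith.2.1
lemma R_lt_one : c.R < 1 := c.isUndistortedWith.2.2.1
lemma one_le_C : 1 ≤ c.C := c.isUndistortedWith.2.2.2.1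
lemma δ_pos : 0 < c.δ := c.isUndistortedWith.2.2.2.2.1
lemma C_pos : 0 < c.C := one_pos.trans_le c.one_le_C
lemma R_pos : 0 < c.R := c.r_pos.trans_le c.r_le_R
lemma r_lt_one : c.r < 1 := c.r_le_R.trans_lt c.R_lt_one

lemma decay {m n : ℕ} (hmn : m ≤ n) {E E' : Set Z} (hE : E ∈ c.cells m) (hE' : E' ∈ c.cells n)
    (hEE' : (E ∩ E').Nonempty) :
    c.r ^ (n - m) / c.C ≤ sdiam c.d E' / sdiam c.d E ∧
      sdiam c.d E' / sdiam c.d E ≤ c.C * c.R ^ (n - m) :=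
  c.isUndistortedWith.2.2.2.2.2.1 m n hmn E hE E' hE' hEE'

lemma mul_sdiam_le_sdist {n : ℕ} {E₁ E₂ : Set Z} (h₁ : E₁ ∈ c.cells n) (h₂ : E₂ ∈ c.cells n)
    (hdisj : Disjoint E₁ E₂) : c.δ * sdiam c.d E₁ ≤ sdist c.d E₁ E₂ :=
  c.isUndistortedWith.2.2.2.2.2.2 n E₁ h₁ E₂ h₂ hdisj

-- If `sdiam E = 0`, the ratio `sdiam E / sdiam E` in `decay` is the junk value `0 < 1 / C`.
lemma sdiam_pos {n : ℕ} {E : Set Z} (hE : E ∈ c.cells n) : 0 < sdiam c.d E := by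
  refine (sdiam_nonneg c.isMetricOn E).lt_of_ne fun h => ?_
  have := (c.decay le_rfl hE hE (by simpa using c.nonempty_of_mem n E hE)).1
  rw [← h, div_zero, Nat.sub_self, pow_zero] at this
  exact (one_div_pos.2 c.C_pos).not_ge this

lemma le_sdiam {S : Set Z} {x y : Z} (hx : x ∈ S) (hy : y ∈ S) : c.d x y ≤ sdiam c.d S := by
  refine _root_.le_sdiam ((bddAbove_of_sdiam_pos (c.sdiam_pos c.univ_mem)).mono ?_) hx hy
  exact image2_subset (subset_univ S) (subset_univ S)

lemma d_pos {x y : Z} (hxy : x ≠ y) : 0 < c.d x y :=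
  (c.isMetricOn.1 x y).lt_of_ne fun h => hxy ((c.isMetricOn.2.1 x y).1 h.symm)

lemma pow_mul_sdiam_le {m n : ℕ} (hmn : m ≤ n) {E E' : Set Z} (hE : E ∈ c.cells m)
    (hE' : E' ∈ c.cells n) (hEE' : (E ∩ E').Nonempty) :
    c.r ^ (n - m) * sdiam c.d E ≤ c.C * sdiam c.d E' := by
  have h := (c.decay hmn hE hE' hEE').1
  rwa [div_le_div_iff₀ c.C_pos (c.sdiam_pos hE), mul_comm (sdiam c.d E')] at h

lemma sdiam_le_mul_pow {m n : ℕ} (hmn : m ≤ n) {E E' : Set Z} (hE : E ∈ c.cells m)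
    (hE' : E' ∈ c.cells n) (hEE' : (E ∩ E').Nonempty) :
    sdiam c.d E' ≤ c.C * c.R ^ (n - m) * sdiam c.d E :=
  (div_le_iff₀ (c.sdiam_pos hE)).1 (c.decay hmn hE hE' hEE').2

lemma sdiam_le_mul {m n : ℕ} (hmn : m ≤ n) {E E' : Set Z} (hE : E ∈ c.cells m)
    (hE' : E' ∈ c.cells n) (hEE' : (E ∩ E').Nonempty) :
    sdiam c.d E' ≤ c.C * sdiam c.d E := by
  refine (c.sdiam_le_mul_pow hmn hE hE' hEE').trans
    (mul_le_mul_of_nonneg_right ?_ (c.sdiam_pos hE).le)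
  exact mul_le_of_le_one_right c.C_pos.le (pow_le_one₀ c.R_pos.le c.R_lt_one.le)

end UndistortedCells

def CellAdj {Z : Type*} (cells : ℕ → Set (Set Z)) (n : ℕ) (p q : Z) : Prop :=
  ∃ E ∈ cells n, ∃ E' ∈ cells n, p ∈ E ∧ q ∈ E' ∧ (E ∩ E').Nonempty

lemma cellAdj_preimage_iff {X Y : Type*} {h : X → Y} (hh : Surjective h)
    {cells : ℕ → Set (Set Y)} {n : ℕ} {p q : X} :
    CellAdj (fun n => preimage h '' cells n) n p q ↔ CellAdj cells n (h p) (h q) := by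
  constructor
  · rintro ⟨_, ⟨E, hE, rfl⟩, _, ⟨E', hE', rfl⟩, hp, hq, x, hxE, hxE'⟩
    exact ⟨E, hE, E', hE', hp, hq, h x, hxE, hxE'⟩
  · rintro ⟨E, hE, E', hE', hp, hq, y, hyE, hyE'⟩
    obtain ⟨x, rfl⟩ := hh y
    exact ⟨_, ⟨E, hE, rfl⟩, _, ⟨E', hE', rfl⟩, hp, hq, x, hyE, hyE'⟩

lemma div_le_div_mul_div {a b p q x y : ℝ} (hb : 0 < b) (hy : 0 < y) (hp₀ : 0 ≤ p)
    (hq : 0 < q) (hp : p ≤ a * x) (hq' : b * y ≤ q) : p / q ≤ a / b * (x / y) := by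
  rw [div_mul_div_comm, div_le_div_iff₀ hq (mul_pos hb hy)]
  calc p * (b * y) ≤ p * q := mul_le_mul_of_nonneg_left hq' hp₀
    _ ≤ a * x * q := mul_le_mul_of_nonneg_right hp hq.le

namespace UndistortedCells

variable {Z : Type*} (c : UndistortedCells Z)

lemma d_le_of_cellAdj {n : ℕ} {p q : Z} (hpq : CellAdj c.cells n p q) {E₀ : Set Z}
    (hE₀ : E₀ ∈ c.cells n) (hp : p ∈ E₀) : c.d p q ≤ c.C * (1 + c.C) * sdiam c.d E₀ := by
  obtain ⟨E, hE, E', hE', hpE, hqE', x, hxE, hxE'⟩ := hpq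
  have hEE₀ := c.sdiam_le_mul le_rfl hE₀ hE ⟨p, hp, hpE⟩
  have hE'E := c.sdiam_le_mul le_rfl hE hE' ⟨x, hxE, hxE'⟩
  calc c.d p q ≤ c.d p x + c.d x q := c.isMetricOn.2.2.2 p x q
    _ ≤ sdiam c.d E + sdiam c.d E' := add_le_add (c.le_sdiam hpE hxE) (c.le_sdiam hxE' hqE')
    _ ≤ sdiam c.d E + c.C * sdiam c.d E := by gcongr
    _ ≤ c.C * (1 + c.C) * sdiam c.d E₀ := by
      rw [← one_add_mul, mul_comm c.C, mul_assoc]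
      exact mul_le_mul_of_nonneg_left hEE₀ (by linarith [c.C_pos])

lemma mul_sdiam_le_d_of_not_cellAdj {n : ℕ} {p q : Z} (hpq : ¬ CellAdj c.cells (n + 1) p q)
    {E₀ : Set Z} (hE₀ : E₀ ∈ c.cells n) (hp : p ∈ E₀) :
    c.δ * c.r / c.C * sdiam c.d E₀ ≤ c.d p q := by
  obtain ⟨F, hF, hpF⟩ := c.exists_mem (n + 1) p
  obtain ⟨G, hG, hqG⟩ := c.exists_mem (n + 1) q
  have hFG : Disjoint F G :=
    disjoint_iff_inter_eq_empty.2 <| not_nonempty_iff_eq_empty.1 fun h =>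
      hpq ⟨F, hF, G, hG, hpF, hqG, h⟩
  have hE₀F := c.pow_mul_sdiam_le (Nat.le_add_right n 1) hE₀ hF ⟨p, hp, hpF⟩
  rw [Nat.add_sub_cancel_left, pow_one] at hE₀F
  calc c.δ * c.r / c.C * sdiam c.d E₀ = c.δ * (c.r * sdiam c.d E₀) / c.C := by ring
    _ ≤ c.δ * (c.C * sdiam c.d F) / c.C :=
      div_le_div_of_nonneg_right (mul_le_mul_of_nonneg_left hE₀F c.δ_pos.le) c.C_pos.le
    _ = c.δ * sdiam c.d F := by field_simp [c.C_pos.ne']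
    _ ≤ sdist c.d F G := c.mul_sdiam_le_sdist hF hG hFG
    _ ≤ c.d p q := sdist_le c.isMetricOn hpF hqG

lemma exists_cellAdj_not_cellAdj_succ {p q : Z} (hpq : p ≠ q) :
    ∃ n, CellAdj c.cells n p q ∧ ¬ CellAdj c.cells (n + 1) p q := by
  classical
  set K := c.C * (1 + c.C) * (c.C * sdiam c.d univ)
  have hK : 0 < K := by have := c.C_pos; have := c.sdiam_pos c.univ_mem; positivity
  have hdeep : ∃ N, ¬ CellAdj c.cells N p q := by
    obtain ⟨N, hN⟩ := exists_pow_lt_of_lt_one (div_pos (c.d_pos hpq) hK) c.R_lt_one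
    refine ⟨N, fun hadj => ?_⟩
    obtain ⟨E, hE, hpE⟩ := c.exists_mem N p
    have hEuniv := c.sdiam_le_mul_pow N.zero_le c.univ_mem hE (by simpa using ⟨p, hpE⟩)
    have h1 := c.d_le_of_cellAdj hadj hE hpE
    have h2 : c.d p q ≤ K * c.R ^ N := by
      rw [Nat.sub_zero] at hEuniv
      have := mul_le_mul_of_nonneg_left hEuniv (by have := c.C_pos; positivity :
        0 ≤ c.C * (1 + c.C))
      linarith
    rw [lt_div_iff₀ hK] at hN
    linarith
  have h0 : CellAdj c.cells 0 p q :=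
    ⟨_, c.univ_mem, _, c.univ_mem, trivial, trivial, p, trivial, trivial⟩
  obtain ⟨n, hn⟩ : ∃ n, Nat.find hdeep = n + 1 :=
    Nat.exists_eq_succ_of_ne_zero fun h => Nat.find_spec hdeep (h ▸ h0)
  refine ⟨n, not_not.1 (Nat.find_min hdeep (by omega)), hn ▸ Nat.find_spec hdeep⟩

-- If `n` is the last level at which `p` and `q` lie in intersecting cells, `d p q` lies between
-- `δ r / C` and `C (1 + C)` times the diameter of any `n`-cell containing `p`.
noncomputable def levelConst : ℝ := c.C * (1 + c.C) / (c.δ * c.r / c.C)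

lemma levelConst_pos : 0 < c.levelConst := by
  have := c.C_pos; have := c.δ_pos; have := c.r_pos
  unfold levelConst; positivity

lemma d_div_d_le_mul_sdiam_div {u v : ℕ} {a b b' : Z} (hu : CellAdj c.cells u a b)
    (hv : ¬ CellAdj c.cells (v + 1) a b') (hab' : a ≠ b') {E E' : Set Z} (hE : E ∈ c.cells u)
    (haE : a ∈ E) (hE' : E' ∈ c.cells v) (haE' : a ∈ E') :
    c.d a b / c.d a b' ≤ c.levelConst * (sdiam c.d E / sdiam c.d E') := by
  have := c.C_pos; have := c.δ_pos; have := c.r_pos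
  exact div_le_div_mul_div (by positivity) (c.sdiam_pos hE') (c.isMetricOn.1 a b) (c.d_pos hab')
    (c.d_le_of_cellAdj hu hE haE) (c.mul_sdiam_le_d_of_not_cellAdj hv hE' haE')

lemma sdiam_div_le_mul_d_div {u v : ℕ} {a b b' : Z} (hu : ¬ CellAdj c.cells (u + 1) a b)
    (hv : CellAdj c.cells v a b') (hab' : a ≠ b') {E E' : Set Z} (hE : E ∈ c.cells u)
    (haE : a ∈ E) (hE' : E' ∈ c.cells v) (haE' : a ∈ E') :
    sdiam c.d E / sdiam c.d E' ≤ c.levelConst * (c.d a b / c.d a b') := by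
  have := c.C_pos; have := c.δ_pos; have := c.r_pos
  have h := div_le_div_mul_div (inv_pos.2 (by positivity : 0 < c.C * (1 + c.C))) (c.d_pos hab')
    (sdiam_nonneg c.isMetricOn E) (c.sdiam_pos hE')
    ((le_inv_mul_iff₀ (by positivity)).2 (c.mul_sdiam_le_d_of_not_cellAdj hu hE haE))
    ((inv_mul_le_iff₀ (by positivity)).2 (c.d_le_of_cellAdj hv hE' haE'))
  rwa [inv_div_inv] at h

end UndistortedCells

section Gauge

open Filter

lemma isQSGauge_of_tendsto {η : ℝ → ℝ} (hc : ContinuousOn η (Ici 0))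
    (hm : StrictMonoOn η (Ici 0)) (h0 : η 0 = 0) (ht : Tendsto η atTop atTop) :
    IsQSGauge η := by
  have hmaps : MapsTo η (Ici 0) (Ici 0) := fun t (htt : 0 ≤ t) =>
    h0 ▸ hm.monotoneOn (mem_Ici.2 le_rfl) htt htt
  refine ⟨hc, hm, h0, hmaps, fun y (hy : 0 ≤ y) => ?_⟩
  obtain ⟨T, hT⟩ := eventually_atTop.1 (ht.eventually_ge_atTop y)
  obtain ⟨t, ht, rfl⟩ := intermediate_value_Icc (le_max_right T 0)
    (hc.mono Icc_subset_Ici_self) ⟨by rwa [h0], hT _ (le_max_left T 0)⟩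
  exact ⟨t, ht.1, rfl⟩

lemma isQSGauge_mul_rpow_add_rpow {M K α β : ℝ} (hM : 0 < M) (hK : 0 < K) (hα : 0 < α)
    (hβ : 0 < β) : IsQSGauge fun t => M * ((K * t) ^ α + (K * t) ^ β) := by
  refine isQSGauge_of_tendsto ?_ ?_ (by simp [hα.ne', hβ.ne']) ?_
  · exact (continuous_const.mul (((Real.continuous_rpow_const hα.le).comp
      (continuous_const_mul K)).add ((Real.continuous_rpow_const hβ.le).comp
      (continuous_const_mul K)))).continuousOn
  · intro s (hs : 0 ≤ s) t _ hst
    have hKst : K * s < K * t := mul_lt_mul_of_pos_left hst hK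
    have hKs : 0 ≤ K * s := mul_nonneg hK.le hs
    exact mul_lt_mul_of_pos_left (add_lt_add (Real.rpow_lt_rpow hKs hKst hα)
      (Real.rpow_lt_rpow hKs hKst hβ)) hM
  · refine tendsto_atTop_mono' _ ?_ (((tendsto_rpow_atTop hα).comp
      (tendsto_id.const_mul_atTop hK)).const_mul_atTop hM)
    filter_upwards [eventually_ge_atTop 0] with t ht
    have : 0 ≤ (K * t) ^ β := Real.rpow_nonneg (mul_nonneg hK.le ht) β
    simp only [Function.comp_apply, id]
    gcongr
    linarith

lemma pow_le_rpow_logb {p ρ z : ℝ} (hp : 0 < p) (hp1 : p ≠ 1) (hρ : 0 < ρ)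
    (hL : 0 ≤ Real.logb p ρ) {k : ℕ} (h : p ^ k ≤ z) : ρ ^ k ≤ z ^ Real.logb p ρ :=
  calc ρ ^ k = (p ^ k) ^ Real.logb p ρ := by
        rw [← Real.rpow_pow_comm hp.le, Real.rpow_logb hp hp1 hρ]
    _ ≤ z ^ Real.logb p ρ := Real.rpow_le_rpow (pow_nonneg hp.le k) h hL

end Gauge

namespace UndistortedCells

variable {X Y : Type*} (cX : UndistortedCells X) (cY : UndistortedCells Y)

lemma logb_r_R_pos : 0 < Real.logb cX.r cY.R :=
  Real.logb_pos_of_base_lt_one cX.r_pos cX.r_lt_one cY.R_pos cY.R_lt_one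

lemma logb_R_r_pos : 0 < Real.logb cX.R cY.r :=
  Real.logb_pos_of_base_lt_one cX.R_pos cX.R_lt_one cY.r_pos cY.r_lt_one

/-- The exponents are chosen so that `(cX.r ^ k) ^ logb cX.r cY.R = cY.R ^ k` (case `v ≤ u`) and
`(cX.R⁻¹ ^ k) ^ logb cX.R cY.r = cY.r⁻¹ ^ k` (case `u ≤ v`), with `k = |u - v|`. -/
lemma sdiam_div_le {u v : ℕ} {A A' : Set X} (hA : A ∈ cX.cells u) (hA' : A' ∈ cX.cells v)
    (hAA' : (A ∩ A').Nonempty) {B B' : Set Y} (hB : B ∈ cY.cells u) (hB' : B' ∈ cY.cells v)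
    (hBB' : (B ∩ B').Nonempty) :
    sdiam cY.d B / sdiam cY.d B' ≤
      cY.C * ((cX.C * (sdiam cX.d A / sdiam cX.d A')) ^ Real.logb cX.r cY.R +
        (cX.C * (sdiam cX.d A / sdiam cX.d A')) ^ Real.logb cX.R cY.r) := by
  set z := cX.C * (sdiam cX.d A / sdiam cX.d A') with hz_def
  have hz : 0 < z := mul_pos cX.C_pos (div_pos (cX.sdiam_pos hA) (cX.sdiam_pos hA'))
  have hzα := Real.rpow_nonneg hz.le (Real.logb cX.r cY.R)
  have hzβ := Real.rpow_nonneg hz.le (Real.logb cX.R cY.r)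
  have hdA' := cX.sdiam_pos hA'
  have hdB' := cY.sdiam_pos hB'
  rw [div_le_iff₀ hdB']
  rcases le_total v u with h | h
  · have hX : cX.r ^ (u - v) ≤ z := by
      rw [hz_def, ← mul_div_assoc, le_div_iff₀ hdA']
      exact cX.pow_mul_sdiam_le h hA' hA (inter_comm A A' ▸ hAA')
    have hY := cY.sdiam_le_mul_pow h hB' hB (inter_comm B B' ▸ hBB')
    calc sdiam cY.d B ≤ cY.C * cY.R ^ (u - v) * sdiam cY.d B' := hY
      _ ≤ cY.C * z ^ Real.logb cX.r cY.R * sdiam cY.d B' := by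
        gcongr
        · exact cY.C_pos.le
        · exact pow_le_rpow_logb cX.r_pos cX.r_lt_one.ne cY.R_pos (logb_r_R_pos cX cY).le hX
      _ ≤ _ := by gcongr; exacts [cY.C_pos.le, le_add_of_nonneg_right hzβ]
  · have hX : cX.R⁻¹ ^ (v - u) ≤ z := by
      rw [hz_def, ← mul_div_assoc, le_div_iff₀ hdA', inv_pow, inv_mul_le_iff₀ (pow_pos cX.R_pos _)]
      linarith [cX.sdiam_le_mul_pow h hA hA' hAA']
    have hY : sdiam cY.d B ≤ cY.C * cY.r⁻¹ ^ (v - u) * sdiam cY.d B' := by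
      rw [inv_pow, mul_assoc, mul_comm, mul_assoc, ← div_eq_inv_mul,
        le_div_iff₀ (pow_pos cY.r_pos _)]
      linarith [cY.pow_mul_sdiam_le h hB hB' hBB']
    have hlogb : Real.logb cX.R⁻¹ cY.r⁻¹ = Real.logb cX.R cY.r := by
      rw [Real.logb_inv_base, Real.logb_inv, neg_neg]
    have hβ := (logb_R_r_pos cX cY).le
    calc sdiam cY.d B ≤ cY.C * cY.r⁻¹ ^ (v - u) * sdiam cY.d B' := hY
      _ ≤ cY.C * z ^ Real.logb cX.R cY.r * sdiam cY.d B' := by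
        gcongr
        · exact cY.C_pos.le
        · rw [← hlogb]
          exact pow_le_rpow_logb (inv_pos.2 cX.R_pos) (inv_ne_one.2 cX.R_lt_one.ne)
            (inv_pos.2 cY.r_pos) (hlogb ▸ hβ) hX
      _ ≤ _ := by gcongr; exacts [cY.C_pos.le, le_add_of_nonneg_left hzα]


theorem exists_qsIneq_of_comap {h : X → Y} (hh : Bijective h)
    (hcells : cX.cells = fun n => preimage h '' cY.cells n) :
    ∃ η, IsQSGauge η ∧ QSIneq cX.d cY.d h η := by
  set α := Real.logb cX.r cY.R
  set β := Real.logb cX.R cY.r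
  refine ⟨_, isQSGauge_mul_rpow_add_rpow (mul_pos cY.levelConst_pos cY.C_pos)
    (mul_pos cX.C_pos cX.levelConst_pos) (logb_r_R_pos cX cY) (logb_R_r_pos cX cY), ?_⟩
  intro a b c hab hac _
  obtain ⟨u, hu, hu'⟩ := cX.exists_cellAdj_not_cellAdj_succ hab
  obtain ⟨v, hv, hv'⟩ := cX.exists_cellAdj_not_cellAdj_succ hac
  obtain ⟨B, hB, haB⟩ := cY.exists_mem u (h a)
  obtain ⟨B', hB', haB'⟩ := cY.exists_mem v (h a)
  have hA : h ⁻¹' B ∈ cX.cells u := hcells ▸ ⟨B, hB, rfl⟩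
  have hA' : h ⁻¹' B' ∈ cX.cells v := hcells ▸ ⟨B', hB', rfl⟩
  have hX := cX.sdiam_div_le_mul_d_div hu' hv hac hA haB hA' haB'
  rw [hcells, cellAdj_preimage_iff hh.2] at hu hv'
  have hY := cY.d_div_d_le_mul_sdiam_div hu hv' (hh.1.ne hac) hB haB hB' haB'
  have hCX := mul_le_mul_of_nonneg_left hX cX.C_pos.le
  rw [← mul_assoc] at hCX
  have hα := (logb_r_R_pos cX cY).le
  have hβ := (logb_R_r_pos cX cY).le
  have := cY.levelConst_pos
  have := cY.C_pos
  calc _ ≤ cY.levelConst * (sdiam cY.d B / sdiam cY.d B') := hY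
    _ ≤ cY.levelConst * (cY.C * ((cX.C * (sdiam cX.d (h ⁻¹' B) / sdiam cX.d (h ⁻¹' B'))) ^ α +
        (cX.C * (sdiam cX.d (h ⁻¹' B) / sdiam cX.d (h ⁻¹' B'))) ^ β)) := by
      gcongr
      exact cX.sdiam_div_le cY hA hA' ⟨a, haB, haB'⟩ hB hB' ⟨h a, haB, haB'⟩
    _ ≤ _ := by
      rw [← mul_assoc]
      have := cX.C_pos
      have := sdiam_nonneg cX.isMetricOn (h ⁻¹' B)
      have := sdiam_nonneg cX.isMetricOn (h ⁻¹' B')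
      dsimp only
      gcongr

end UndistortedCells

section Quasisymmetry

variable {X Y : Type*} {dX : X → X → ℝ} {f : X → Y} {η : ℝ → ℝ}

lemma IsQSGauge.nonneg (hη : IsQSGauge η) {t : ℝ} (ht : 0 ≤ t) : 0 ≤ η t := hη.2.2.2.1 ht

lemma IsQSGauge.pos (hη : IsQSGauge η) {t : ℝ} (ht : 0 < t) : 0 < η t :=
  hη.2.2.1 ▸ hη.2.1 (mem_Ici.2 le_rfl) (mem_Ici.2 ht.le) ht

lemma IsQSGauge.apply_le_apply (hη : IsQSGauge η) {s t : ℝ} (hs : 0 ≤ s) (hst : s ≤ t) :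
    η s ≤ η t :=
  hη.2.1.monotoneOn (mem_Ici.2 hs) (mem_Ici.2 (hs.trans hst)) hst

lemma IsQSGauge.le_of_apply_le (hη : IsQSGauge η) {s t : ℝ} (hs : 0 ≤ s) (ht : 0 ≤ t)
    (h : η s ≤ η t) : s ≤ t :=
  (hη.2.1.le_iff_le hs ht).1 h

lemma IsQSGauge.exists_pos_apply_eq (hη : IsQSGauge η) {s : ℝ} (hs : 0 < s) :
    ∃ t, 0 < t ∧ η t = s := by
  obtain ⟨t, ht, rfl⟩ := hη.2.2.2.2 (mem_Ici.2 hs.le)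
  exact ⟨t, (mem_Ici.1 ht).lt_of_ne fun h => hs.ne' (h ▸ hη.2.2.1), rfl⟩

noncomputable def qsConst (η : ℝ → ℝ) : ℝ := 2 * (1 + (η 1)⁻¹)

lemma IsQSGauge.qsConst_pos (hη : IsQSGauge η) : 0 < qsConst η := by
  have := hη.pos one_pos
  unfold qsConst; positivity

lemma IsQSGauge.exists_pos_qsConst_mul_eq (hη : IsQSGauge η) {s : ℝ} (hs : 0 < s) :
    ∃ t, 0 < t ∧ qsConst η * η t = s := by
  obtain ⟨t, ht, hηt⟩ := hη.exists_pos_apply_eq (div_pos hs hη.qsConst_pos)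
  exact ⟨t, ht, by rw [hηt, mul_div_cancel₀ _ hη.qsConst_pos.ne']⟩

variable (cY : UndistortedCells Y)

/-- Compare `b` with a point `a ∈ A` farther than `diam A / 3` from `x`; the summand `(η 1)⁻¹`
covers the case `b = a`, to which the quasisymmetry inequality does not apply. -/
lemma QSIneq.d_le_mul_sdiam_image (hX : IsMetricOn dX) (hf : Injective f) (hη : IsQSGauge η)
    (hqs : QSIneq dX cY.d f η) {A B : Set X} (hA : 0 < sdiam dX A) (hB : 0 < sdiam dX B)
    {x b : X} (hxA : x ∈ A) (hxB : x ∈ B) (hbB : b ∈ B) :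
    cY.d (f x) (f b) ≤
      (1 + (η 1)⁻¹) * η (3 * sdiam dX B / sdiam dX A) * sdiam cY.d (f '' A) := by
  set t := 3 * sdiam dX B / sdiam dX A
  have ht : 0 ≤ t := by positivity
  have hηt : 0 ≤ (1 + (η 1)⁻¹) * η t * sdiam cY.d (f '' A) :=
    mul_nonneg (mul_nonneg (by have := hη.pos one_pos; positivity) (hη.nonneg ht))
      (sdiam_nonneg cY.isMetricOn _)
  obtain ⟨a, haA, hxa⟩ := exists_sdiam_div_three_lt hX hA x
  have hdxa : 0 < dX x a := by linarith
  have hxb : dX x b ≤ sdiam dX B := le_sdiam (bddAbove_of_sdiam_pos hB) hxB hbB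
  have hfxa : cY.d (f x) (f a) ≤ sdiam cY.d (f '' A) :=
    cY.le_sdiam (mem_image_of_mem f hxA) (mem_image_of_mem f haA)
  have hratio : dX x b / dX x a ≤ t := by
    rw [div_le_iff₀ hdxa]
    calc dX x b ≤ sdiam dX B := hxb
      _ = t * (sdiam dX A / 3) := by simp only [t]; field_simp
      _ ≤ t * dX x a := by gcongr
  by_cases hbx : b = x
  · rw [hbx, (cY.isMetricOn.2.1 _ _).2 rfl]
    exact hηt
  have hη1 := hη.pos one_pos
  by_cases hba : b = a
  · subst hba
    have h1t : 1 ≤ t := (div_self hdxa.ne').symm.le.trans hratio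
    calc cY.d (f x) (f b) ≤ sdiam cY.d (f '' A) := hfxa
      _ = (η 1)⁻¹ * η 1 * sdiam cY.d (f '' A) := by rw [inv_mul_cancel₀ hη1.ne', one_mul]
      _ ≤ (1 + (η 1)⁻¹) * η t * sdiam cY.d (f '' A) := by
        gcongr
        · exact sdiam_nonneg cY.isMetricOn _
        · linarith
        · exact hη.apply_le_apply zero_le_one h1t
  have hq := hqs x b a (Ne.symm hbx) (fun h => hdxa.ne' ((hX.2.1 x a).2 h)) hba
  rw [div_le_iff₀ (cY.d_pos fun h => hdxa.ne' ((hX.2.1 x a).2 (hf h)))] at hq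
  calc cY.d (f x) (f b) ≤ η (dX x b / dX x a) * cY.d (f x) (f a) := hq
    _ ≤ η t * sdiam cY.d (f '' A) :=
      mul_le_mul (hη.apply_le_apply (div_nonneg (hX.1 x b) hdxa.le) hratio) hfxa
        (cY.isMetricOn.1 _ _) (hη.nonneg ht)
    _ ≤ (1 + (η 1)⁻¹) * η t * sdiam cY.d (f '' A) := by
      rw [mul_assoc]
      exact le_mul_of_one_le_left (mul_nonneg (hη.nonneg ht) (sdiam_nonneg cY.isMetricOn _))
        (by have := inv_pos.2 hη1; linarith)

lemma QSIneq.sdiam_image_le (hX : IsMetricOn dX) (hf : Injective f) (hη : IsQSGauge η)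
    (hqs : QSIneq dX cY.d f η) {A B : Set X} (hA : 0 < sdiam dX A) (hB : 0 < sdiam dX B)
    {x : X} (hxA : x ∈ A) (hxB : x ∈ B) :
    sdiam cY.d (f '' B) ≤
      qsConst η * η (3 * sdiam dX B / sdiam dX A) * sdiam cY.d (f '' A) := by
  unfold qsConst
  have key := fun b (hb : b ∈ B) => hqs.d_le_mul_sdiam_image cY hX hf hη hA hB hxA hxB hb
  refine sdiam_le (by linarith [(cY.isMetricOn.1 _ _).trans (key x hxB)]) ?_
  rintro _ ⟨b₁, hb₁, rfl⟩ _ ⟨b₂, hb₂, rfl⟩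
  linarith [key b₁ hb₁, key b₂ hb₂, cY.isMetricOn.2.2.2 (f b₁) (f x) (f b₂),
    cY.isMetricOn.2.2.1 (f b₁) (f x)]

lemma QSIneq.mul_sdiam_le_of_le_sdiam_image (hX : IsMetricOn dX) (hf : Injective f)
    (hη : IsQSGauge η) (hqs : QSIneq dX cY.d f η) {A B : Set X} (hA : 0 < sdiam dX A)
    (hB : 0 < sdiam dX B) (hfA : 0 < sdiam cY.d (f '' A)) {x : X} (hxA : x ∈ A) (hxB : x ∈ B)
    {t : ℝ} (ht : 0 ≤ t)
    (h : qsConst η * η t * sdiam cY.d (f '' A) ≤ sdiam cY.d (f '' B)) :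
    t * sdiam dX A ≤ 3 * sdiam dX B := by
  have hle := h.trans (hqs.sdiam_image_le cY hX hf hη hA hB hxA hxB)
  rw [mul_le_mul_iff_left₀ hfA, mul_le_mul_iff_right₀ hη.qsConst_pos] at hle
  rw [← le_div_iff₀ hA]
  exact hη.le_of_apply_le ht (by positivity) hle

lemma QSIneq.mul_sdiam_le_sdist (hX : IsMetricOn dX) (hf : Injective f) (hη : IsQSGauge η)
    (hqs : QSIneq dX cY.d f η) {A₁ A₂ : Set X} (hA₁ : 0 < sdiam dX A₁) (hA₂ : A₂.Nonempty)
    (hdisj : Disjoint A₁ A₂) {t : ℝ} (ht : 0 ≤ t)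
    (hsep : η t * sdiam cY.d (f '' A₁) ≤ sdist cY.d (f '' A₁) (f '' A₂)) :
    t / 3 * sdiam dX A₁ ≤ sdist dX A₁ A₂ := by
  refine le_sdist (nonempty_of_sdiam_pos hA₁) hA₂ fun p hp q hq => ?_
  obtain ⟨p', hp', hpp'⟩ := exists_sdiam_div_three_lt hX hA₁ p
  have hdpp' : 0 < dX p p' := by linarith
  have hne : ∀ {a b}, a ∈ A₁ → b ∈ A₂ → a ≠ b := fun ha hb e => hdisj.ne_of_mem ha hb e
  have hq' := hqs p q p' (hne hp hq) (fun e => hdpp'.ne' ((hX.2.1 p p').2 e))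
    (fun e => hne hp' hq e.symm)
  rw [div_le_iff₀ (cY.d_pos fun e => hdpp'.ne' ((hX.2.1 p p').2 (hf e)))] at hq'
  have hfpp' : cY.d (f p) (f p') ≤ sdiam cY.d (f '' A₁) :=
    cY.le_sdiam (mem_image_of_mem f hp) (mem_image_of_mem f hp')
  have hsepq := hsep.trans (sdist_le cY.isMetricOn (mem_image_of_mem f hp)
    (mem_image_of_mem f hq))
  have hηle : η t * cY.d (f p) (f p') ≤ η (dX p q / dX p p') * cY.d (f p) (f p') :=
    ((mul_le_mul_of_nonneg_left hfpp' (hη.nonneg ht)).trans hsepq).trans hq'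
  have htle := hη.le_of_apply_le ht (div_nonneg (hX.1 p q) hdpp'.le)
    (le_of_mul_le_mul_right hηle (cY.d_pos fun e => hdpp'.ne' ((hX.2.1 p p').2 (hf e))))
  rw [le_div_iff₀ hdpp'] at htle
  calc t / 3 * sdiam dX A₁ = t * (sdiam dX A₁ / 3) := by ring
    _ ≤ t * dX p p' := by gcongr
    _ ≤ dX p q := htle

end Quasisymmetry

lemma one_half_pow_div_le {k₀ : ℕ} (hk₀ : 0 < k₀) (k : ℕ) :
    (1 / 2 : ℝ) ^ (k / k₀) ≤ 2 * ((1 / 2 : ℝ) ^ (k₀ : ℝ)⁻¹) ^ k := by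
  set R := (1 / 2 : ℝ) ^ (k₀ : ℝ)⁻¹
  have hR : 0 < R := by positivity
  have hR1 : R ≤ 1 := Real.rpow_le_one (by norm_num) (by norm_num) (by positivity)
  have hRk₀ : R ^ k₀ = 1 / 2 := Real.rpow_inv_natCast_pow (by norm_num) hk₀.ne'
  calc (1 / 2 : ℝ) ^ (k / k₀) = 2 * (R ^ (k₀ * (k / k₀)) * R ^ k₀) := by
        rw [pow_mul, hRk₀]; ring
    _ ≤ 2 * (R ^ (k₀ * (k / k₀)) * R ^ (k % k₀)) := by
        have := pow_le_pow_of_le_one hR.le hR1 (Nat.mod_lt k hk₀).le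
        have := pow_pos hR (k₀ * (k / k₀))
        nlinarith
    _ = 2 * R ^ k := by rw [← pow_add, Nat.div_add_mod]

section LocalBounds

variable {Z : Type*} {cells : ℕ → Set (Set Z)} {d : Z → Z → ℝ}

lemma pow_mul_sdiam_le_of_local_bounds (hcover : ∀ n (x : Z), ∃ E ∈ cells n, x ∈ E)
    {ε₀ ε₁ : ℝ} (hε₀ : 0 ≤ ε₀) (hε₁ : 0 ≤ ε₁)
    (hsame : ∀ n, ∀ A ∈ cells n, ∀ B ∈ cells n, (A ∩ B).Nonempty → ε₁ * sdiam d A ≤ sdiam d B)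
    (hchild : ∀ n, ∀ A ∈ cells n, ∀ B ∈ cells (n + 1), (A ∩ B).Nonempty →
      ε₀ * sdiam d A ≤ sdiam d B)
    {m k : ℕ} {E E' : Set Z} (hE : E ∈ cells m) (hE' : E' ∈ cells (m + k)) {x : Z} (hxE : x ∈ E)
    (hxE' : x ∈ E') : ε₁ ^ 2 * ε₀ ^ k * sdiam d E ≤ sdiam d E' := by
  choose F hF hxF using hcover
  have hchain : ε₀ ^ k * sdiam d (F m x) ≤ sdiam d (F (m + k) x) :=
    geom_le (u := fun j => sdiam d (F (m + j) x)) hε₀ k fun j _ =>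
      hchild _ _ (hF _ x) _ (hF _ x) ⟨x, hxF _ x, hxF _ x⟩
  have h₁ := hsame m E hE _ (hF m x) ⟨x, hxE, hxF m x⟩
  have h₂ := hsame _ _ (hF (m + k) x) E' hE' ⟨x, hxF _ x, hxE'⟩
  calc ε₁ ^ 2 * ε₀ ^ k * sdiam d E = ε₁ * (ε₀ ^ k * (ε₁ * sdiam d E)) := by ring
    _ ≤ ε₁ * (ε₀ ^ k * sdiam d (F m x)) := by gcongr
    _ ≤ ε₁ * sdiam d (F (m + k) x) := by gcongr
    _ ≤ sdiam d E' := h₂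

lemma sdiam_le_of_local_bounds (hcover : ∀ n (x : Z), ∃ E ∈ cells n, x ∈ E)
    {ε₁ : ℝ} (hε₁ : 0 ≤ ε₁) {k₀ : ℕ}
    (hdeeper : ∀ m n, m ≤ n → ∀ A ∈ cells m, ∀ B ∈ cells n, (A ∩ B).Nonempty →
      ε₁ * sdiam d B ≤ sdiam d A)
    (hhalf : ∀ n, ∀ A ∈ cells n, ∀ B ∈ cells (n + k₀), (A ∩ B).Nonempty →
      2 * sdiam d B ≤ sdiam d A)
    {m k : ℕ} {E E' : Set Z} (hE : E ∈ cells m) (hE' : E' ∈ cells (m + k)) {x : Z} (hxE : x ∈ E)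
    (hxE' : x ∈ E') : ε₁ ^ 2 * sdiam d E' ≤ (1 / 2) ^ (k / k₀) * sdiam d E := by
  choose F hF hxF using hcover
  have hchain : sdiam d (F (m + k₀ * (k / k₀)) x) ≤ (1 / 2) ^ (k / k₀) * sdiam d (F m x) :=
    le_geom (u := fun i => sdiam d (F (m + k₀ * i) x)) (by norm_num) (k / k₀) fun i _ => by
      have := hhalf _ _ (hF (m + k₀ * i) x) (F (m + k₀ * (i + 1)) x)
        (by rw [mul_add_one, ← add_assoc]; exact hF _ x) ⟨x, hxF _ x, hxF _ x⟩
      linarith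
  have h₁ := hdeeper _ _ le_rfl E hE _ (hF m x) ⟨x, hxE, hxF m x⟩
  have h₂ := hdeeper _ _ (by have := Nat.mul_div_le k k₀; omega) _ (hF (m + k₀ * (k / k₀)) x)
    E' hE' ⟨x, hxF _ x, hxE'⟩
  calc ε₁ ^ 2 * sdiam d E' = ε₁ * (ε₁ * sdiam d E') := by ring
    _ ≤ ε₁ * sdiam d (F (m + k₀ * (k / k₀)) x) := by gcongr
    _ ≤ ε₁ * ((1 / 2) ^ (k / k₀) * sdiam d (F m x)) := by gcongr
    _ = (1 / 2) ^ (k / k₀) * (ε₁ * sdiam d (F m x)) := by ring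
    _ ≤ (1 / 2) ^ (k / k₀) * sdiam d E := by gcongr

theorem exists_decay_of_local_bounds
    (hcover : ∀ n (x : Z), ∃ E ∈ cells n, x ∈ E) (hpos : ∀ n, ∀ E ∈ cells n, 0 < sdiam d E)
    {ε₀ ε₁ : ℝ} (hε₀ : 0 < ε₀) (hε₁ : 0 < ε₁) (hε₁1 : ε₁ ≤ 1) {k₀ : ℕ} (hk₀ : 0 < k₀)
    (hdeeper : ∀ m n, m ≤ n → ∀ A ∈ cells m, ∀ B ∈ cells n, (A ∩ B).Nonempty →
      ε₁ * sdiam d B ≤ sdiam d A)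
    (hchild : ∀ n, ∀ A ∈ cells n, ∀ B ∈ cells (n + 1), (A ∩ B).Nonempty →
      ε₀ * sdiam d A ≤ sdiam d B)
    (hhalf : ∀ n, ∀ A ∈ cells n, ∀ B ∈ cells (n + k₀), (A ∩ B).Nonempty →
      2 * sdiam d B ≤ sdiam d A) :
    ∃ r R C : ℝ, 0 < r ∧ r ≤ R ∧ R < 1 ∧ 1 ≤ C ∧
      ∀ m n : ℕ, m ≤ n → ∀ E ∈ cells m, ∀ E' ∈ cells n, (E ∩ E').Nonempty →
        r ^ (n - m) / C ≤ sdiam d E' / sdiam d E ∧ sdiam d E' / sdiam d E ≤ C * R ^ (n - m) := by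
  set R := (1 / 2 : ℝ) ^ (k₀ : ℝ)⁻¹
  have hR : 0 < R := by positivity
  have hC : 0 < 2 / ε₁ ^ 2 := by positivity
  refine ⟨min ε₀ R, R, 2 / ε₁ ^ 2, lt_min hε₀ hR, min_le_right _ _,
    Real.rpow_lt_one (by norm_num) (by norm_num) (by positivity), ?_, ?_⟩
  · rw [le_div_iff₀ (by positivity)]
    nlinarith
  rintro m n hmn E hE E' hE' ⟨x, hxE, hxE'⟩
  obtain ⟨k, rfl⟩ := Nat.exists_eq_add_of_le hmn
  rw [Nat.add_sub_cancel_left]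
  have hdE := hpos _ _ hE
  constructor
  · have h := pow_mul_sdiam_le_of_local_bounds hcover hε₀.le hε₁.le
      (fun n A hA B hB hAB => hdeeper n n le_rfl B hB A hA (inter_comm A B ▸ hAB))
      hchild hE hE' hxE hxE'
    have hrk : (min ε₀ R) ^ k ≤ ε₀ ^ k := pow_le_pow_left₀ (lt_min hε₀ hR).le (min_le_left _ _) k
    rw [div_le_div_iff₀ hC hdE]
    calc (min ε₀ R) ^ k * sdiam d E ≤ 2 * (ε₀ ^ k * sdiam d E) := by
          have := pow_pos hε₀ k
          nlinarith [mul_le_mul_of_nonneg_right hrk hdE.le]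
      _ = 2 / ε₁ ^ 2 * (ε₁ ^ 2 * ε₀ ^ k * sdiam d E) := by field_simp
      _ ≤ sdiam d E' * (2 / ε₁ ^ 2) := by rw [mul_comm]; gcongr
  · have h := sdiam_le_of_local_bounds hcover hε₁.le hdeeper hhalf hE hE' hxE hxE'
    rw [div_le_iff₀ hdE]
    calc sdiam d E' = 1 / ε₁ ^ 2 * (ε₁ ^ 2 * sdiam d E') := by field_simp
      _ ≤ 1 / ε₁ ^ 2 * (2 * R ^ k * sdiam d E) := by
        gcongr ?_ * ?_
        exact h.trans (mul_le_mul_of_nonneg_right (one_half_pow_div_le hk₀ k) hdE.le)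
      _ = 2 / ε₁ ^ 2 * R ^ k * sdiam d E := by ring

end LocalBounds

lemma UndistortedCells.sdiam_pos_of_image_mem {X Y : Type*} (cY : UndistortedCells Y)
    {dX : X → X → ℝ} (hX : IsMetricOn dX) {B : ℝ} (hB : ∀ x y, dX x y ≤ B) {f : X → Y}
    {n : ℕ} {E : Set X} (hE : f '' E ∈ cY.cells n) : 0 < sdiam dX E := by
  obtain ⟨_, ⟨x, hx, rfl⟩, _, ⟨y, hy, rfl⟩, hxy⟩ :=
    exists_ne_of_sdiam_pos cY.isMetricOn (cY.sdiam_pos hE)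
  exact sdiam_pos_of_ne hX ⟨B, by rintro _ ⟨a, -, b, -, rfl⟩; exact hB a b⟩ hx hy
    (fun h => hxy (h ▸ rfl))

structure IsCellQuasisymmetric {X Y : Type*} (cells : ℕ → Set (Set X)) (dX : X → X → ℝ)
    (cY : UndistortedCells Y) (f : X → Y) (η : ℝ → ℝ) : Prop where
  isMetricOn : IsMetricOn dX
  injective : Injective f
  isQSGauge : IsQSGauge η
  qsIneq : QSIneq dX cY.d f η
  image_mem : ∀ n, ∀ E ∈ cells n, f '' E ∈ cY.cells n
  sdiam_pos : ∀ n, ∀ E ∈ cells n, 0 < sdiam dX E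

namespace IsCellQuasisymmetric

variable {X Y : Type*} {cells : ℕ → Set (Set X)} {dX : X → X → ℝ} {cY : UndistortedCells Y}
  {f : X → Y} {η : ℝ → ℝ}

lemma image_inter_nonempty {A A' : Set X} (hAA' : (A ∩ A').Nonempty) :
    (f '' A ∩ f '' A').Nonempty :=
  (hAA'.image f).mono (image_inter_subset f A A')

lemma mul_sdiam_le (hq : IsCellQuasisymmetric cells dX cY f η) {m n : ℕ} {A A' : Set X}
    (hA : A ∈ cells m) (hA' : A' ∈ cells n) (hAA' : (A ∩ A').Nonempty) {t : ℝ} (ht : 0 ≤ t)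
    (h : qsConst η * η t * sdiam cY.d (f '' A) ≤ sdiam cY.d (f '' A')) :
    t * sdiam dX A ≤ 3 * sdiam dX A' :=
  hq.qsIneq.mul_sdiam_le_of_le_sdiam_image cY hq.isMetricOn hq.injective hq.isQSGauge
    (hq.sdiam_pos _ _ hA) (hq.sdiam_pos _ _ hA') (cY.sdiam_pos (hq.image_mem _ _ hA))
    hAA'.some_mem.1 hAA'.some_mem.2 ht h

lemma exists_deeper_bound (hq : IsCellQuasisymmetric cells dX cY f η) :
    ∃ ε, 0 < ε ∧ ε ≤ 1 ∧ ∀ m n, m ≤ n → ∀ A ∈ cells m, ∀ A' ∈ cells n, (A ∩ A').Nonempty →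
      ε * sdiam dX A' ≤ sdiam dX A := by
  have hC := cY.C_pos
  obtain ⟨t, ht, hηt⟩ := hq.isQSGauge.exists_pos_qsConst_mul_eq (one_div_pos.2 hC)
  refine ⟨min (t / 3) 1, by positivity, min_le_right _ _, ?_⟩
  intro m n hmn A hA A' hA' hAA'
  have hY := cY.sdiam_le_mul hmn (hq.image_mem _ _ hA) (hq.image_mem _ _ hA')
    (image_inter_nonempty hAA')
  have h := hq.mul_sdiam_le hA' hA (inter_comm A A' ▸ hAA') ht.le (by
    rw [hηt, one_div_mul_eq_div, div_le_iff₀ hC]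
    linarith)
  have := hq.sdiam_pos _ _ hA'
  nlinarith [min_le_left (t / 3) 1]

lemma exists_child_bound (hq : IsCellQuasisymmetric cells dX cY f η) :
    ∃ ε, 0 < ε ∧ ∀ n, ∀ A ∈ cells n, ∀ A' ∈ cells (n + 1), (A ∩ A').Nonempty →
      ε * sdiam dX A ≤ sdiam dX A' := by
  have hC := cY.C_pos
  obtain ⟨t, ht, hηt⟩ := hq.isQSGauge.exists_pos_qsConst_mul_eq (div_pos cY.r_pos hC)
  refine ⟨t / 3, by positivity, fun n A hA A' hA' hAA' => ?_⟩
  have hY := cY.pow_mul_sdiam_le (Nat.le_add_right n 1) (hq.image_mem _ _ hA)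
    (hq.image_mem _ _ hA') (image_inter_nonempty hAA')
  rw [Nat.add_sub_cancel_left, pow_one] at hY
  have h := hq.mul_sdiam_le hA hA' hAA' ht.le (by
    rw [hηt, div_mul_eq_mul_div, div_le_iff₀ hC]
    linarith)
  linarith

lemma exists_halving_gap (hq : IsCellQuasisymmetric cells dX cY f η) :
    ∃ k, 0 < k ∧ ∀ n, ∀ A ∈ cells n, ∀ A' ∈ cells (n + k), (A ∩ A').Nonempty →
      2 * sdiam dX A' ≤ sdiam dX A := by
  have hΛη : 0 < qsConst η * η 6 :=
    mul_pos hq.isQSGauge.qsConst_pos (hq.isQSGauge.pos (by norm_num))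
  obtain ⟨k, hk⟩ := exists_pow_lt_of_lt_one (one_div_pos.2 (mul_pos hΛη cY.C_pos)) cY.R_lt_one
  have hRk : qsConst η * η 6 * (cY.C * cY.R ^ (k + 1)) ≤ 1 := by
    rw [lt_div_iff₀ (mul_pos hΛη cY.C_pos)] at hk
    have := mul_le_mul_of_nonneg_left
      (pow_le_pow_of_le_one cY.R_pos.le cY.R_lt_one.le (Nat.le_add_right k 1))
      (mul_pos hΛη cY.C_pos).le
    nlinarith
  refine ⟨k + 1, k.succ_pos, fun n A hA A' hA' hAA' => ?_⟩
  have hY := cY.sdiam_le_mul_pow (Nat.le_add_right n (k + 1)) (hq.image_mem _ _ hA)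
    (hq.image_mem _ _ hA') (image_inter_nonempty hAA')
  rw [Nat.add_sub_cancel_left] at hY
  have h := hq.mul_sdiam_le hA' hA (inter_comm A A' ▸ hAA') (by norm_num : (0 : ℝ) ≤ 6) (by
    have := sdiam_nonneg cY.isMetricOn (f '' A)
    calc qsConst η * η 6 * sdiam cY.d (f '' A')
        ≤ qsConst η * η 6 * (cY.C * cY.R ^ (k + 1) * sdiam cY.d (f '' A)) := by gcongr
      _ ≤ sdiam cY.d (f '' A) := by rw [← mul_assoc]; nlinarith)
  linarith

lemma exists_separation (hq : IsCellQuasisymmetric cells dX cY f η) :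
    ∃ δ, 0 < δ ∧ ∀ n, ∀ E₁ ∈ cells n, ∀ E₂ ∈ cells n, Disjoint E₁ E₂ →
      δ * sdiam dX E₁ ≤ sdist dX E₁ E₂ := by
  obtain ⟨t, ht, hηt⟩ := hq.isQSGauge.exists_pos_apply_eq cY.δ_pos
  refine ⟨t / 3, by positivity, fun n E₁ hE₁ E₂ hE₂ hdisj => ?_⟩
  refine hq.qsIneq.mul_sdiam_le_sdist cY hq.isMetricOn hq.injective hq.isQSGauge
    (hq.sdiam_pos _ _ hE₁) (nonempty_of_sdiam_pos (hq.sdiam_pos _ _ hE₂)) hdisj ht.le ?_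
  rw [hηt]
  exact cY.mul_sdiam_le_sdist (hq.image_mem _ _ hE₁) (hq.image_mem _ _ hE₂)
    ((disjoint_image_iff hq.injective).2 hdisj)

theorem isUndistorted (hq : IsCellQuasisymmetric cells dX cY f η)
    (hcover : ∀ n (x : X), ∃ E ∈ cells n, x ∈ E) : IsUndistorted cells dX := by
  obtain ⟨ε₁, hε₁, hε₁1, hdeeper⟩ := hq.exists_deeper_bound
  obtain ⟨ε₀, hε₀, hchild⟩ := hq.exists_child_bound
  obtain ⟨k, hk, hhalf⟩ := hq.exists_halving_gap
  obtain ⟨r, R, C, hr, hrR, hR, hC, hdecay⟩ :=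
    exists_decay_of_local_bounds hcover hq.sdiam_pos hε₀ hε₁ hε₁1 hk hdeeper hchild hhalf
  obtain ⟨δ, hδ, hsep⟩ := hq.exists_separation
  exact ⟨r, R, C, δ, hr, hrR, hR, hC, hδ, hdecay, hsep⟩

end IsCellQuasisymmetric

theorem stmt13_general {X Y : Type*} [MetricSpace X]
    [TopologicalSpace Y] [CompactSpace Y]
    (CSY : CellStructure Y) (dY : Y → Y → ℝ)
    (hmetY : IsMetricOn dY)
    (hrigid : ∀ g : Y → Y, IsHomeomorph g → ∀ n : ℕ, ∀ E ∈ CSY.cells n, g '' E ∈ CSY.cells n)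
    (hundY : IsUndistorted CSY.cells dY)
    (h : X → Y) (hh : IsHomeomorph h) :
    (∃ f : X → Y, IsHomeomorph f ∧
        ∃ η : ℝ → ℝ, IsQSGauge η ∧ QSIneq (fun a b : X => dist a b) dY f η) ↔
      IsUndistorted (fun n => (fun E => h ⁻¹' E) '' CSY.cells n)
        (fun a b : X => dist a b) := by
  obtain ⟨e, rfl⟩ := isHomeomorph_iff_exists_homeomorph.1 hh
  have : CompactSpace X := e.symm.compactSpace
  obtain ⟨B, hB⟩ := Metric.isBounded_iff.1 (isCompact_univ (X := X)).isBounded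
  obtain ⟨r, R, C, δ, hY⟩ := hundY
  let cY : UndistortedCells Y := ⟨CSY.toCellSystem, dY, r, R, C, δ, hY, hmetY⟩
  let SX := CSY.toCellSystem.comap e e.surjective
  constructor
  · rintro ⟨f, hf, η, hη, hqs⟩
    have himage : ∀ n, ∀ E ∈ SX.cells n, f '' E ∈ cY.cells n := by
      rintro n _ ⟨E, hE, rfl⟩
      rw [← e.image_symm, ← image_comp]
      exact hrigid _ (hf.comp e.symm.isHomeomorph) n E hE
    exact IsCellQuasisymmetric.isUndistorted ⟨isMetricOn_dist, hf.injective, hη, hqs, himage,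
      fun n E hE => cY.sdiam_pos_of_image_mem isMetricOn_dist
        (fun x y => hB (mem_univ x) (mem_univ y)) (himage n E hE)⟩ SX.exists_mem
  · rintro ⟨r', R', C', δ', hX⟩
    obtain ⟨η, hη, hqs⟩ := UndistortedCells.exists_qsIneq_of_comap
      ⟨SX, _, r', R', C', δ', hX, isMetricOn_dist⟩ cY e.bijective rfl
    exact ⟨e, hh, η, hη, hqs⟩

/-- Let `Y` be a topologically rigid finitely ramified fractal with
undistorted metric `dY`, and `h : X → Y` a homeomorphism from a metric space `X`.
Then there is a quasisymmetry from `X` to `Y` if and only if the metric of `X` is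
undistorted with respect to the cell structure pulled back along `h`. -/
theorem stmt13 {X Y : Type*} [MetricSpace X]
    [TopologicalSpace Y] [CompactSpace Y] [ConnectedSpace Y]
    [TopologicalSpace.MetrizableSpace Y]
    (CSY : CellStructure Y) (dY : Y → Y → ℝ)
    (hmetY : IsMetricOn dY) (htopY : InducesTopology dY)
    (hrigid : ∀ g : Y → Y, IsHomeomorph g → ∀ n : ℕ, ∀ E ∈ CSY.cells n, g '' E ∈ CSY.cells n)
    (hundY : IsUndistorted CSY.cells dY)
    (h : X → Y) (hh : IsHomeomorph h) :
    (∃ f : X → Y, IsHomeomorph f ∧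
        ∃ η : ℝ → ℝ, IsQSGauge η ∧ QSIneq (fun a b : X => dist a b) dY f η) ↔
      IsUndistorted (fun n => (fun E => h ⁻¹' E) '' CSY.cells n)
        (fun a b : X => dist a b) :=
  stmt13_general CSY dY hmetY hrigid hundY h hh
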